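/- For all integers d ≥ 1 and k ≥ 1, with V = ℂ^{2d}, the quotient vector space V^⊗k/C_k has complex dimension (1/k)·Σ_{i=1}^{k} (2d)^{gcd(k,i)}. (This quotient is the degree-k homogeneous part n_k of the necklace Lie algebra in 2d variables.) -/

import Mathlib

open scoped TensorProduct

noncomputable section

/-- `Cyc d k` : the submodule C_k ⊆ V^⊗k (V = ℂ^{2d}), spanned by all
`v₁⊗…⊗vₖ − v₂⊗…⊗vₖ⊗v₁`. -/
def Cyc (d k : ℕ) : Submodule ℂ (⨂[ℂ] _ : Fin k, (Fin (2 * d) → ℂ)) :=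
  Submodule.span ℂ {x | ∃ v : Fin k → (Fin (2 * d) → ℂ),
    x = PiTensorProduct.tprod ℂ v -
        PiTensorProduct.tprod ℂ (fun i => v (finRotate k i))}

/-!
The pure tensors `e_{w 0} ⊗ ⋯ ⊗ e_{w (k-1)}`, indexed by words `w : Fin k → Fin (2d)`, form a
basis of `V^⊗k` which the cyclic rotation `ρ` of the factors permutes, and `C_k` is the range
of `1 - ρ`. By rank–nullity `dim V^⊗k/C_k = dim ker (1 - ρ)`, and in coordinates `ker (1 - ρ)`
consists of the functions on words that are constant on rotation orbits; so the dimension is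
the number of necklaces of length `k` in `2d` colours. Burnside's lemma counts them: rotation
by `a` fixes exactly the words constant on the cosets of `⟨a⟩ ≤ ℤ/k`, and there are
`(2d)^gcd(k,a)` of those.
-/

open Module AddAction DomAddAct PiTensorProduct

section InvariantFunctions

variable {G X : Type*} [AddGroup G] [AddAction G X]

theorem AddAction.orbitRel_le_ker_iff {β : Type*} {f : X → β} :
    orbitRel G X ≤ Setoid.ker f ↔ ∀ (g : G) x, f (g +ᵥ x) = f x := by
  refine ⟨fun h g x => h (mem_orbit x g), fun h x y hxy => ?_⟩
  obtain ⟨g, rfl⟩ := hxy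
  exact h g y

theorem AddAction.forall_vadd_eq_of_zmultiples_eq_top {β : Type*} {g₀ : G}
    (hg₀ : AddSubgroup.zmultiples g₀ = ⊤) {f : X → β} (hf : ∀ x, f (g₀ +ᵥ x) = f x)
    (g : G) (x : X) : f (g +ᵥ x) = f x := by
  have hg : g ∈ AddSubgroup.closure {g₀} := by
    rw [← AddSubgroup.zmultiples_eq_closure, hg₀]
    trivial
  induction hg using AddSubgroup.closure_induction generalizing x with
  | mem g hg => rw [Set.mem_singleton_iff.1 hg, hf]
  | zero => rw [zero_vadd]
  | add g h _ _ ihg ihh => rw [add_vadd, ihg, ihh]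
  | neg g _ ih => rw [← ih, vadd_neg_vadd]

theorem AddAction.card_invariant_fun [Finite X] (β : Type*) :
    Nat.card {f : X → β // ∀ (g : G) x, f (g +ᵥ x) = f x} =
      Nat.card β ^ Nat.card (orbitRel.Quotient G X) := by
  rw [← Nat.card_fun]
  exact Nat.card_congr <| (Equiv.subtypeEquivRight fun f => orbitRel_le_ker_iff.symm).trans
    (Setoid.liftEquiv _)

variable (G X) in
def AddAction.invariantFun (R : Type*) [Semiring R] : Submodule R (X → R) where
  carrier := {f | ∀ (g : G) x, f (g +ᵥ x) = f x}
  add_mem' hf hh g x := by simp [hf g x, hh g x]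
  zero_mem' _ _ := rfl
  smul_mem' c f hf g x := by simp [hf g x]

theorem AddAction.invariantFun_eq_range (R : Type*) [Semiring R] :
    invariantFun G X R =
      LinearMap.range (LinearMap.funLeft R R (Quotient.mk (orbitRel G X))) := by
  ext f
  refine ⟨fun hf => ⟨Quotient.lift f (orbitRel_le_ker_iff.2 hf), rfl⟩, ?_⟩
  rintro ⟨f, rfl⟩ g x
  exact congrArg f (Quotient.sound (mem_orbit x g))

theorem AddAction.finrank_invariantFun [Finite X] (R : Type*) [Semiring R]
    [StrongRankCondition R] :
    finrank R (invariantFun G X R) = Nat.card (orbitRel.Quotient G X) := by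
  have := Fintype.ofFinite (orbitRel.Quotient G X)
  rw [invariantFun_eq_range, LinearMap.finrank_range_of_inj
    (LinearMap.funLeft_injective_of_surjective _ _ _ Quotient.mk_surjective),
    finrank_fintype_fun_eq_card, Nat.card_eq_fintype_card]

end InvariantFunctions

section PermutedBasis

variable {R K M X : Type*}

theorem Module.Basis.equivFun_apply_of_apply_eq [Semiring R] [AddCommMonoid M] [Module R M]
    [Finite X] (b : Basis X R M) (e : X ≃ X) {ρ : M →ₗ[R] M} (hρ : ∀ x, ρ (b x) = b (e x))
    (t : M) (y : X) : b.equivFun (ρ t) y = b.equivFun t (e.symm y) := by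
  classical
  suffices b.equivFun.toLinearMap ∘ₗ ρ = LinearMap.funLeft R R e.symm ∘ₗ b.equivFun from
    congrFun (LinearMap.congr_fun this t) y
  refine b.ext fun x => funext fun y => ?_
  simp [hρ, Basis.equivFun_self, Finsupp.single_apply, Equiv.eq_symm_apply]

theorem LinearMap.finrank_quotient_range_eq_finrank_ker [DivisionRing K] [AddCommGroup M]
    [Module K M] [FiniteDimensional K M] (f : M →ₗ[K] M) :
    finrank K (M ⧸ range f) = finrank K (ker f) := by
  have := (range f).finrank_quotient_add_finrank
  have := f.finrank_range_add_finrank_ker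
  omega

variable {G : Type*} [AddGroup G] [AddAction G X]

theorem Module.Basis.ker_id_sub_eq_comap_invariantFun [Ring R] [AddCommGroup M] [Module R M]
    [Finite X] (b : Basis X R M) {g₀ : G} (hg₀ : AddSubgroup.zmultiples g₀ = ⊤)
    {ρ : M →ₗ[R] M} (hρ : ∀ x, ρ (b x) = b (g₀ +ᵥ x)) :
    LinearMap.ker (LinearMap.id - ρ) = (invariantFun G X R).comap b.equivFun.toLinearMap := by
  ext t
  have hcoord (y : X) : b.equivFun (ρ t) y = b.equivFun t (-g₀ +ᵥ y) :=
    b.equivFun_apply_of_apply_eq (AddAction.toPerm g₀) hρ t y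
  simp only [LinearMap.mem_ker, LinearMap.sub_apply, LinearMap.id_apply, sub_eq_zero,
    Submodule.mem_comap, eq_comm (a := t)]
  constructor
  · intro h
    refine forall_vadd_eq_of_zmultiples_eq_top (g₀ := -g₀) (by rwa [AddSubgroup.zmultiples_neg])
      fun y => ?_
    show b.equivFun t (-g₀ +ᵥ y) = b.equivFun t y
    rw [← hcoord, h]
  · intro h
    refine b.equivFun.injective (funext fun y => ?_)
    rw [hcoord]
    exact h (-g₀) y

theorem Module.Basis.finrank_quotient_range_id_sub_eq_card_orbits [DivisionRing K]
    [AddCommGroup M] [Module K M] [Finite X] (b : Basis X K M) {g₀ : G}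
    (hg₀ : AddSubgroup.zmultiples g₀ = ⊤) {ρ : M →ₗ[K] M} (hρ : ∀ x, ρ (b x) = b (g₀ +ᵥ x)) :
    finrank K (M ⧸ LinearMap.range (LinearMap.id - ρ)) = Nat.card (orbitRel.Quotient G X) := by
  have := b.finiteDimensional_of_finite
  rw [LinearMap.finrank_quotient_range_eq_finrank_ker, b.ker_id_sub_eq_comap_invariantFun hg₀ hρ,
    Submodule.comap_equiv_eq_map_symm, LinearEquiv.finrank_map_eq, finrank_invariantFun]

end PermutedBasis

section Necklaces

variable {G ι : Type*} [AddGroup G]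

theorem DomAddAct.mk_vadd_eq_self_iff (a : G) (w : G → ι) :
    mk a +ᵥ w = w ↔ ∀ (h : AddSubgroup.zmultiples a) j, w (h +ᵥ j) = w j := by
  refine ⟨fun hw h j => ?_, fun hw => funext fun j => hw ⟨a, AddSubgroup.mem_zmultiples a⟩ j⟩
  obtain ⟨h, z, rfl⟩ := h
  have : mk (z • a) +ᵥ w = w := by
    rw [mk_zsmul]
    exact AddSubgroup.zsmul_mem (stabilizer Gᵈᵃᵃ w) hw z
  exact congrFun this j

theorem DomAddAct.card_fixedBy_mk [Finite G] (a : G) :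
    Nat.card (fixedBy (G → ι) (mk a)) = Nat.card ι ^ (AddSubgroup.zmultiples a).index := by
  rw [Nat.card_congr (Equiv.subtypeEquivRight fun w => mem_fixedBy.trans (mk_vadd_eq_self_iff a w)),
    card_invariant_fun]
  exact congrArg _ (Nat.card_congr (QuotientAddGroup.quotientRightRelEquivQuotientLeftRel _))

theorem DomAddAct.card_orbits_mul_card [Fintype G] [Finite ι] :
    Nat.card (orbitRel.Quotient Gᵈᵃᵃ (G → ι)) * Nat.card G =
      ∑ a : G, Nat.card ι ^ (AddSubgroup.zmultiples a).index := by
  classical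
  have : Fintype Gᵈᵃᵃ := Fintype.ofEquiv G mk
  have := Fintype.ofFinite (orbitRel.Quotient Gᵈᵃᵃ (G → ι))
  have (g : Gᵈᵃᵃ) := Fintype.ofFinite (fixedBy (G → ι) g)
  have burnside := sum_card_fixedBy_eq_card_orbits_mul_card_addGroup Gᵈᵃᵃ (G → ι)
  simp only [← Nat.card_eq_fintype_card] at burnside
  rw [Nat.card_congr (mk : G ≃ Gᵈᵃᵃ), ← burnside, ← Fintype.sum_equiv mk _ _ fun _ => rfl]
  exact Finset.sum_congr rfl fun a _ => card_fixedBy_mk a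

theorem Fin.index_zmultiples {n : ℕ} (a : Fin (n + 1)) :
    (AddSubgroup.zmultiples a).index = Nat.gcd (n + 1) a.val := by
  have hord : addOrderOf a = (n + 1) / Nat.gcd (n + 1) a.val := by
    have h := ZMod.addOrderOf_coe (n := n + 1) a.val n.succ_ne_zero
    rwa [show ((a.val : ℕ) : ZMod (n + 1)) = a from Fin.cast_val_eq_self a] at h
  have hmul := (AddSubgroup.zmultiples a).index_mul_card
  rw [Nat.card_zmultiples, hord, Nat.card_fin] at hmul
  have hpos : 0 < (n + 1) / Nat.gcd (n + 1) a.val :=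
    Nat.div_pos (Nat.gcd_le_left _ n.succ_pos) (Nat.gcd_pos_of_pos_left _ n.succ_pos)
  refine Nat.eq_of_mul_eq_mul_right hpos (hmul.trans ?_)
  rw [Nat.mul_comm, Nat.div_mul_cancel (Nat.gcd_dvd_left _ _)]

theorem Finset.sum_range_eq_sum_Icc_of_eq {β : Type*} [AddCommMonoid β] (f : ℕ → β) {n : ℕ}
    (h : f 0 = f n) : ∑ i ∈ range n, f i = ∑ i ∈ Icc 1 n, f i := by
  rcases n with _ | n
  · simp
  rw [sum_range_succ', ← Ico_add_one_right_eq_Icc, sum_Ico_eq_sum_range, Nat.add_sub_cancel,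
    sum_range_succ, h, add_comm 1 n]
  simp only [add_comm 1]

theorem DomAddAct.card_orbits_fin_mul (ι : Type*) [Finite ι] (n : ℕ) :
    Nat.card (orbitRel.Quotient (Fin (n + 1))ᵈᵃᵃ (Fin (n + 1) → ι)) * (n + 1) =
      ∑ i ∈ Finset.Icc 1 (n + 1), Nat.card ι ^ Nat.gcd (n + 1) i := by
  have burnside := card_orbits_mul_card (G := Fin (n + 1)) (ι := ι)
  simp only [Nat.card_fin, Fin.index_zmultiples] at burnside
  rw [burnside, Fin.sum_univ_eq_sum_range (fun i => Nat.card ι ^ Nat.gcd (n + 1) i),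
    Finset.sum_range_eq_sum_Icc_of_eq]
  simp

open Fin.NatCast in
theorem DomAddAct.zmultiples_mk_one_fin (n : ℕ) :
    AddSubgroup.zmultiples (mk (1 : Fin (n + 1))) = ⊤ := by
  refine eq_top_iff.2 fun g _ => ⟨(mk.symm g).val, ?_⟩
  change ((mk.symm g).val : ℤ) • mk (1 : Fin (n + 1)) = g
  rw [← mk_zsmul, natCast_zsmul, show (mk.symm g).val • (1 : Fin (n + 1)) = mk.symm g by simp,
    Equiv.apply_symm_apply]

end Necklaces

theorem PiTensorProduct.span_tprod_sub_tprod_comp_eq_range {R ι M : Type*} [CommRing R]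
    [AddCommGroup M] [Module R M] (e : Equiv.Perm ι) :
    Submodule.span R {x | ∃ v : ι → M, x = tprod R v - tprod R (fun i => v (e i))} =
      LinearMap.range (LinearMap.id -
        (reindex R (fun _ : ι => M) e.symm : (⨂[R] _ : ι, M) →ₗ[R] ⨂[R] _ : ι, M)) := by
  set f : Module.End R (⨂[R] _ : ι, M) :=
    LinearMap.id - (reindex R (fun _ : ι => M) e.symm).toLinearMap
  have hgen : {x | ∃ v : ι → M, x = tprod R v - tprod R (fun i => v (e i))} =
      f '' Set.range (tprod R) := by
    ext x
    simp [f, reindex_tprod, eq_comm]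
  rw [hgen, Submodule.span_image, span_tprod_eq_top, Submodule.map_top]

theorem PiTensorProduct.reindex_finRotate_symm_basis {R ι : Type*} [CommSemiring R] [Fintype ι]
    (n : ℕ) (w : Fin (n + 1) → ι) :
    reindex R (fun _ => ι → R) (finRotate (n + 1)).symm
        (Basis.piTensorProduct (fun _ => Pi.basisFun R ι) w) =
      Basis.piTensorProduct (fun _ => Pi.basisFun R ι) (mk (1 : Fin (n + 1)) +ᵥ w) := by
  simp [reindex_tprod, DomAddAct.vadd_apply, finRotate_apply, add_comm]

theorem stmt_1 (d k : ℕ) :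
    Module.finrank ℂ ((⨂[ℂ] _ : Fin k, (Fin (2 * d) → ℂ)) ⧸ Cyc d k) * k =
      ∑ i ∈ Finset.Icc 1 k, (2 * d) ^ Nat.gcd k i := by
  rcases k with _ | n
  · simp
  rw [Cyc, span_tprod_sub_tprod_comp_eq_range, Basis.finrank_quotient_range_id_sub_eq_card_orbits
      _ (zmultiples_mk_one_fin n) (reindex_finRotate_symm_basis n),
    card_orbits_fin_mul, Nat.card_fin]
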